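/- For any two transformation data (f, γ₁, γ₂, γ₃) and (f̄, γ̄₁, γ̄₂, γ̄₃), with all eight functions differentiable, and any pointwise data (G, Γ, p, ξ): T(f̄, γ̄₁, γ̄₂, γ̄₃)(T(f, γ₁, γ₂, γ₃)(G, Γ, p, ξ)) = T(f̄∘f, γ̄₁∘f + γ₁, γ̄₂∘f + γ₂, γ̄₃∘f + γ₃)(G, Γ, p, ξ), and T(id, 0, 0, 0) acts as the identity. In other words, the conformal and generalized almost-geodesic transformations (e1)–(e3) constitute a self-consistent group action on the triple (metric, connection, scalar field). -/

import Mathlib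

/-- Pointwise geometric data of the Palatini scalar-tensor theory at a fixed
spacetime point: a metric `G : V ≃ₗ[ℝ] V*`, connection coefficients
`Γ : V → V → V`, the value `p` of the scalar field `Φ`, and the value
`ξ ∈ V*` of the differential `dΦ`. -/
structure PointData (V : Type*) [AddCommGroup V] [Module ℝ V] where
  G : V ≃ₗ[ℝ] Module.Dual ℝ V
  Γ : V → V → V
  p : ℝ
  ξ : Module.Dual ℝ V

/-- The action `T(f, γ₁, γ₂, γ₃)` implementing the conformal and generalized
almost-geodesic transformations (e1)–(e3):
`G ↦ exp(2γ₁(p))•G`,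
`Γ(u,v) ↦ Γ(u,v) + γ₂'(p)(ξ(u)v + ξ(v)u) − γ₃'(p)(G u v)(G⁻¹ ξ)`,
`p ↦ f(p)`, `ξ ↦ f'(p)•ξ`. -/
noncomputable def PointData.act {V : Type*} [AddCommGroup V] [Module ℝ V]
    (f γ₁ γ₂ γ₃ : ℝ → ℝ) (d : PointData V) : PointData V where
  G := d.G.trans (LinearEquiv.smulOfNeZero ℝ (Module.Dual ℝ V)
        (Real.exp (2 * γ₁ d.p)) (Real.exp_ne_zero _))
  Γ := fun u v => d.Γ u v + deriv γ₂ d.p • (d.ξ u • v + d.ξ v • u)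
        - deriv γ₃ d.p • ((d.G u v) • d.G.symm d.ξ)
  p := f d.p
  ξ := deriv f d.p • d.ξ

/-!
The metric and scalar-field components compose because exponentials multiply and by the chain
rule. For the connection, the point is that the term `(G u v) • G⁻¹ ξ` is blind to the conformal
rescaling of `G` and only picks up the factor `f'(p)` from `ξ`; hence the coefficients of the two
deformations add up to `γ̄₂'(f p) f'(p) + γ₂'(p) = (γ̄₂ ∘ f + γ₂)'(p)`, and likewise for `γ₃`.
-/

attribute [ext] PointData

theorem deriv_comp_add {f g γ : ℝ → ℝ} {x : ℝ} (hg : DifferentiableAt ℝ g (f x))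
    (hf : DifferentiableAt ℝ f x) (hγ : DifferentiableAt ℝ γ x) :
    deriv (g ∘ f + γ) x = deriv g (f x) * deriv f x + deriv γ x :=
  ((hg.hasDerivAt.comp x hf.hasDerivAt).add hγ.hasDerivAt).deriv

namespace PointData

variable {V : Type*} [AddCommGroup V] [Module ℝ V] {f γ₁ γ₂ γ₃ fb g₁ g₂ g₃ : ℝ → ℝ}
  (d : PointData V)

@[simp] lemma act_p : (d.act f γ₁ γ₂ γ₃).p = f d.p := rfl

@[simp] lemma act_ξ : (d.act f γ₁ γ₂ γ₃).ξ = deriv f d.p • d.ξ := rfl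

lemma act_G_apply (u : V) : (d.act f γ₁ γ₂ γ₃).G u = Real.exp (2 * γ₁ d.p) • d.G u := rfl

lemma act_G_symm_apply (η : Module.Dual ℝ V) :
    (d.act f γ₁ γ₂ γ₃).G.symm η = (Real.exp (2 * γ₁ d.p))⁻¹ • d.G.symm η := by
  simp [act, Units.smul_def]

lemma act_Γ_apply (u v : V) :
    (d.act f γ₁ γ₂ γ₃).Γ u v = d.Γ u v + deriv γ₂ d.p • (d.ξ u • v + d.ξ v • u)
      - deriv γ₃ d.p • (d.G u v • d.G.symm d.ξ) := rfl

lemma act_G_apply_smul_G_symm_ξ (u v : V) :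
    (d.act f γ₁ γ₂ γ₃).G u v • (d.act f γ₁ γ₂ γ₃).G.symm (d.act f γ₁ γ₂ γ₃).ξ
      = deriv f d.p • (d.G u v • d.G.symm d.ξ) := by
  rw [act_G_apply, act_G_symm_apply, act_ξ, map_smul, LinearMap.smul_apply, smul_eq_mul,
    smul_smul, smul_smul, smul_smul]
  congr 1
  field_simp

lemma act_act_G :
    ((d.act f γ₁ γ₂ γ₃).act fb g₁ g₂ g₃).G
      = (d.act (fb ∘ f) (g₁ ∘ f + γ₁) (g₂ ∘ f + γ₂) (g₃ ∘ f + γ₃)).G := by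
  ext u v
  simp only [act_G_apply, act_p, LinearMap.smul_apply, smul_eq_mul, ← mul_assoc, ← Real.exp_add,
    Pi.add_apply, Function.comp_apply, mul_add]

lemma act_act_Γ (hf : DifferentiableAt ℝ f d.p) (hγ₂ : DifferentiableAt ℝ γ₂ d.p)
    (hγ₃ : DifferentiableAt ℝ γ₃ d.p) (hg₂ : DifferentiableAt ℝ g₂ (f d.p))
    (hg₃ : DifferentiableAt ℝ g₃ (f d.p)) :
    ((d.act f γ₁ γ₂ γ₃).act fb g₁ g₂ g₃).Γ
      = (d.act (fb ∘ f) (g₁ ∘ f + γ₁) (g₂ ∘ f + γ₂) (g₃ ∘ f + γ₃)).Γ := by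
  ext u v
  rw [act_Γ_apply, act_G_apply_smul_G_symm_ξ, act_Γ_apply, act_Γ_apply, act_ξ, act_p,
    deriv_comp_add hg₂ hf hγ₂, deriv_comp_add hg₃ hf hγ₃]
  simp only [LinearMap.smul_apply, smul_eq_mul]
  module

lemma act_act_ξ (hfb : DifferentiableAt ℝ fb (f d.p)) (hf : DifferentiableAt ℝ f d.p) :
    ((d.act f γ₁ γ₂ γ₃).act fb g₁ g₂ g₃).ξ
      = (d.act (fb ∘ f) (g₁ ∘ f + γ₁) (g₂ ∘ f + γ₂) (g₃ ∘ f + γ₃)).ξ := by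
  rw [act_ξ, act_ξ, act_ξ, act_p, deriv_comp d.p hfb hf, smul_smul]

lemma act_id_zero : d.act id 0 0 0 = d := by
  ext u v <;> simp [act_G_apply, act_Γ_apply]

end PointData

theorem pointData_act_group_action_general {V : Type*} [AddCommGroup V] [Module ℝ V]
    (f γ₁ γ₂ γ₃ fb g₁ g₂ g₃ : ℝ → ℝ)
    (hf : Differentiable ℝ f)
    (hγ₂ : Differentiable ℝ γ₂) (hγ₃ : Differentiable ℝ γ₃)
    (hfb : Differentiable ℝ fb)
    (hg₂ : Differentiable ℝ g₂) (hg₃ : Differentiable ℝ g₃)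
    (d : PointData V) :
    PointData.act fb g₁ g₂ g₃ (PointData.act f γ₁ γ₂ γ₃ d)
      = PointData.act (fb ∘ f) (g₁ ∘ f + γ₁) (g₂ ∘ f + γ₂) (g₃ ∘ f + γ₃) d ∧
    PointData.act id 0 0 0 d = d :=
  ⟨PointData.ext d.act_act_G (d.act_act_Γ (hf _) (hγ₂ _) (hγ₃ _) (hg₂ _) (hg₃ _)) rfl
    (d.act_act_ξ (hfb _) (hf _)), d.act_id_zero⟩

/-- The conformal and generalized almost-geodesic transformations (e1)–(e3)
form a self-consistent group action on the triple (metric, connection, scalar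
field): consecutive actions by `(f, γ₁, γ₂, γ₃)` and `(f̄, γ̄₁, γ̄₂, γ̄₃)` agree
with the action of the composite `(f̄∘f, γ̄₁∘f + γ₁, γ̄₂∘f + γ₂, γ̄₃∘f + γ₃)`,
and `(id, 0, 0, 0)` acts as the identity. -/
theorem pointData_act_group_action {V : Type*} [AddCommGroup V] [Module ℝ V]
    (f γ₁ γ₂ γ₃ fb g₁ g₂ g₃ : ℝ → ℝ)
    (hf : Differentiable ℝ f) (hγ₁ : Differentiable ℝ γ₁)
    (hγ₂ : Differentiable ℝ γ₂) (hγ₃ : Differentiable ℝ γ₃)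
    (hfb : Differentiable ℝ fb) (hg₁ : Differentiable ℝ g₁)
    (hg₂ : Differentiable ℝ g₂) (hg₃ : Differentiable ℝ g₃)
    (d : PointData V) :
    PointData.act fb g₁ g₂ g₃ (PointData.act f γ₁ γ₂ γ₃ d)
      = PointData.act (fb ∘ f) (g₁ ∘ f + γ₁) (g₂ ∘ f + γ₂) (g₃ ∘ f + γ₃) d ∧
    PointData.act id 0 0 0 d = d :=
  pointData_act_group_action_general f γ₁ γ₂ γ₃ fb g₁ g₂ g₃ hf hγ₂ hγ₃ hfb hg₂ hg₃ d
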